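/- With p_n = 3·∫_0^1 ∫_0^1 (1-a)^3·(3-(1-a)(3-b))^n/(3-(1-a)(2-b))^{n+1} db da, the mean ∑_{n=0}^∞ n·p_n equals 2; equivalently, 3·∫_0^1 ∫_0^1 (1-a)·(a(3-b)+b) db da = 2. -/

import Mathlib

/-!
Write `u = 1 - a` and `q = 3 - u (3 - b)`; the denominator is then `q + u`. For `u > 0` the `n`-th
integrand times `n` is `u³ / (q + u) · n xⁿ` with `x = q / (q + u) < 1`, and `∑ n xⁿ = x / (1 - x)²`
sums these to `u q = (1 - a)(a (3 - b) + b)`. The terms are nonnegative, so the series is its own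
dominating function and may be integrated termwise; what remains is a polynomial integral.
-/

open MeasureTheory

noncomputable def stitP (n : ℕ) : ℝ :=
  3 * ∫ a in (0:ℝ)..1, ∫ b in (0:ℝ)..1,
    (1 - a) ^ 3 * (3 - (1 - a) * (3 - b)) ^ n / (3 - (1 - a) * (2 - b)) ^ (n + 1)

open Set

theorem hasSum_integral_of_nonneg {ι α : Type*} [Countable ι] [MeasurableSpace α]
    {μ : Measure α} {F : ι → α → ℝ} {G : α → ℝ} (hF_meas : ∀ n, AEStronglyMeasurable (F n) μ)
    (hF_nonneg : ∀ n, 0 ≤ᵐ[μ] F n) (hG : Integrable G μ)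
    (h_lim : ∀ᵐ x ∂μ, HasSum (fun n => F n x) (G x)) :
    HasSum (fun n => ∫ x, F n x ∂μ) (∫ x, G x ∂μ) :=
  hasSum_integral_of_dominated_convergence F hF_meas
    (fun n => (hF_nonneg n).mono fun _ hx => (Real.norm_of_nonneg hx).le)
    (h_lim.mono fun _ hx => hx.summable)
    (hG.congr (h_lim.mono fun _ hx => hx.tsum_eq.symm)) h_lim

section Rectangle

variable {E : Type*} [NormedAddCommGroup E] {f : ℝ × ℝ → E} {a b c d : ℝ}

theorem ContinuousOn.integrableOn_Ioc_prod_Ioc (hf : ContinuousOn f (Icc a b ×ˢ Icc c d)) :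
    IntegrableOn f (Ioc a b ×ˢ Ioc c d) :=
  (hf.integrableOn_compact (isCompact_Icc.prod isCompact_Icc)).mono_set
    (prod_mono Ioc_subset_Icc_self Ioc_subset_Icc_self)

theorem intervalIntegral_intervalIntegral_eq_setIntegral_prod [NormedSpace ℝ E]
    (hab : a ≤ b) (hcd : c ≤ d) (hf : ContinuousOn f (Icc a b ×ˢ Icc c d)) :
    ∫ x in a..b, ∫ y in c..d, f (x, y) = ∫ p in Ioc a b ×ˢ Ioc c d, f p := by
  simp only [intervalIntegral.integral_of_le hab, intervalIntegral.integral_of_le hcd]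
  exact (setIntegral_prod f hf.integrableOn_Ioc_prod_Ioc).symm

end Rectangle

theorem hasSum_coe_mul_geometric_ratio {q u : ℝ} (hq : 0 ≤ q) (hu : 0 ≤ u) :
    HasSum (fun n : ℕ => n * (u ^ 3 * q ^ n / (q + u) ^ (n + 1))) (u * q) := by
  rcases hu.eq_or_lt with rfl | hu
  · simp
  have hr : 0 < q + u := by positivity
  have hx : ‖q / (q + u)‖ < 1 := by
    rw [Real.norm_of_nonneg (by positivity), div_lt_one hr]
    linarith
  have hterm : (fun n : ℕ => n * (u ^ 3 * q ^ n / (q + u) ^ (n + 1))) =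
      fun n : ℕ => u ^ 3 / (q + u) * (n * (q / (q + u)) ^ n) := by
    funext n
    rw [div_pow]
    field_simp
    ring
  have hval : u * q = u ^ 3 / (q + u) * (q / (q + u) / (1 - q / (q + u)) ^ 2) := by
    rw [one_sub_div hr.ne', add_sub_cancel_left]
    field_simp
  rw [hterm, hval]
  exact (hasSum_coe_mul_geometric_of_norm_lt_one hx).mul_left _

namespace Stit

noncomputable def density (n : ℕ) (p : ℝ × ℝ) : ℝ :=
  (1 - p.1) ^ 3 * (3 - (1 - p.1) * (3 - p.2)) ^ n / (3 - (1 - p.1) * (2 - p.2)) ^ (n + 1)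

section UnitSquare

variable {p : ℝ × ℝ}

theorem three_sub_mul_nonneg (hp : p ∈ Icc (0 : ℝ) 1 ×ˢ Icc (0 : ℝ) 1) :
    0 ≤ 3 - (1 - p.1) * (3 - p.2) := by
  obtain ⟨⟨ha0, ha1⟩, hb0, hb1⟩ := hp
  nlinarith

theorem one_le_three_sub_mul (hp : p ∈ Icc (0 : ℝ) 1 ×ˢ Icc (0 : ℝ) 1) :
    1 ≤ 3 - (1 - p.1) * (2 - p.2) := by
  obtain ⟨⟨ha0, ha1⟩, hb0, hb1⟩ := hp
  nlinarith

theorem continuousOn_density (n : ℕ) :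
    ContinuousOn (density n) (Icc (0 : ℝ) 1 ×ˢ Icc (0 : ℝ) 1) :=
  ContinuousOn.div (by fun_prop) (by fun_prop) fun _ hp =>
    pow_ne_zero _ (zero_lt_one.trans_le (one_le_three_sub_mul hp)).ne'

theorem density_nonneg (n : ℕ) (hp : p ∈ Icc (0 : ℝ) 1 ×ˢ Icc (0 : ℝ) 1) :
    0 ≤ density n p := by
  have hu : 0 ≤ 1 - p.1 := sub_nonneg.2 hp.1.2
  have hq := three_sub_mul_nonneg hp
  have hr := one_le_three_sub_mul hp
  unfold density
  positivity

theorem hasSum_coe_mul_density (hp : p ∈ Icc (0 : ℝ) 1 ×ˢ Icc (0 : ℝ) 1) :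
    HasSum (fun n : ℕ => n * density n p) ((1 - p.1) * (p.1 * (3 - p.2) + p.2)) := by
  have hr : 3 - (1 - p.1) * (2 - p.2) = 3 - (1 - p.1) * (3 - p.2) + (1 - p.1) := by ring
  simp only [density, hr]
  convert hasSum_coe_mul_geometric_ratio (three_sub_mul_nonneg hp) (sub_nonneg.2 hp.1.2) using 1
  ring

end UnitSquare

theorem stitP_eq_setIntegral (n : ℕ) :
    stitP n = 3 * ∫ p in Ioc (0 : ℝ) 1 ×ˢ Ioc (0 : ℝ) 1, density n p := by
  rw [← intervalIntegral_intervalIntegral_eq_setIntegral_prod zero_le_one zero_le_one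
    (continuousOn_density n)]
  rfl

theorem three_mul_integral_integral_limit :
    3 * (∫ a in (0:ℝ)..1, ∫ b in (0:ℝ)..1, (1 - a) * (a * (3 - b) + b)) = 2 := by
  have inner (a : ℝ) :
      ∫ b in (0:ℝ)..1, (1 - a) * (a * (3 - b) + b) = (1 - a) * (5 * a + 1) / 2 := by
    simp only [show ∀ b, (1 - a) * (a * (3 - b) + b) = 3 * a * (1 - a) + (1 - a) ^ 2 * b from
      fun b => by ring]
    rw [intervalIntegral.integral_add intervalIntegrable_const
      (Continuous.intervalIntegrable (by fun_prop) _ _), intervalIntegral.integral_const,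
      intervalIntegral.integral_const_mul, integral_id]
    simp only [smul_eq_mul]
    ring
  simp only [inner, show ∀ a : ℝ, (1 - a) * (5 * a + 1) / 2 = 1 / 2 + 2 * a - 5 / 2 * a ^ 2 from
    fun a => by ring]
  rw [intervalIntegral.integral_sub (Continuous.intervalIntegrable (by fun_prop) _ _)
      (Continuous.intervalIntegrable (by fun_prop) _ _),
    intervalIntegral.integral_add intervalIntegrable_const
      (Continuous.intervalIntegrable (by fun_prop) _ _),
    intervalIntegral.integral_const, intervalIntegral.integral_const_mul,
    intervalIntegral.integral_const_mul, integral_id, integral_pow]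
  norm_num

theorem hasSum_coe_mul_stitP : HasSum (fun n : ℕ => n * stitP n) 2 := by
  set S := Ioc (0 : ℝ) 1 ×ˢ Ioc (0 : ℝ) 1
  have hS : S ⊆ Icc (0 : ℝ) 1 ×ˢ Icc (0 : ℝ) 1 :=
    prod_mono Ioc_subset_Icc_self Ioc_subset_Icc_self
  have hSm : MeasurableSet S := measurableSet_Ioc.prod measurableSet_Ioc
  have hG : ContinuousOn (fun p : ℝ × ℝ => (1 - p.1) * (p.1 * (3 - p.2) + p.2))
      (Icc (0 : ℝ) 1 ×ˢ Icc (0 : ℝ) 1) := by fun_prop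
  have hsum := hasSum_integral_of_nonneg (μ := volume.restrict S)
    (fun n => (((continuousOn_density n).mono hS).aestronglyMeasurable hSm).const_mul _)
    (fun n => ae_restrict_of_forall_mem hSm fun p hp =>
      mul_nonneg n.cast_nonneg (density_nonneg n (hS hp)))
    hG.integrableOn_Ioc_prod_Ioc
    (ae_restrict_of_forall_mem hSm fun p hp => hasSum_coe_mul_density (hS hp))
  have hterm : (fun n : ℕ => n * stitP n) = fun n : ℕ => 3 * ∫ p in S, n * density n p := by
    funext n
    rw [stitP_eq_setIntegral, integral_const_mul]
    ring
  rw [hterm, ← three_mul_integral_integral_limit,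
    intervalIntegral_intervalIntegral_eq_setIntegral_prod zero_le_one zero_le_one hG]
  exact hsum.mul_left 3

end Stit

theorem stit_mean_number_of_vertices :
    (∑' n : ℕ, (n : ℝ) * stitP n = 2) ∧
    3 * (∫ a in (0:ℝ)..1, ∫ b in (0:ℝ)..1, (1 - a) * (a * (3 - b) + b)) = 2 :=
  ⟨Stit.hasSum_coe_mul_stitP.tsum_eq, Stit.three_mul_integral_integral_limit⟩
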